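/- Framing law for refinement: in the algebra of local monotone predicate transformers over an assertion quantale, [p * r, q * r] ⊑ [p, q], i.e. the specification statement from p to q refines the specification from p*r to q*r, for all predicates p, q, r. -/
import Mathlib


class PartialMonoid (M : Type*) where
  pmul : M → M → Option M
  pone : M
  pone_mul : ∀ x : M, pmul pone x = some x
  mul_pone : ∀ x : M, pmul x pone = some x
  passoc : ∀ x y z w : M,
    (∃ u, pmul x y = some u ∧ pmul u z = some w) ↔
    (∃ v, pmul y z = some v ∧ pmul x v = some w)

class PartialCommMonoid (M : Type*) extends PartialMonoid M where
  pcomm : ∀ x y : M, pmul x y = pmul y x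

open PartialMonoid

/-- Separating conjunction on predicates over `S × M`. -/
def sep {S M : Type*} [PartialCommMonoid M] (P Q : Set (S × M)) : Set (S × M) :=
  {σ | ∃ h₁ h₂, pmul h₁ h₂ = some σ.2 ∧ (σ.1, h₁) ∈ P ∧ (σ.1, h₂) ∈ Q}

/-- Locality of a predicate transformer. -/
def LocalPT {S M : Type*} [PartialCommMonoid M] (F : Set (S × M) → Set (S × M)) : Prop :=
  ∀ a b : Set (S × M), sep (F a) b ⊆ F (sep a b)

/-- Specification statement restricted to local monotone predicate transformers:
`[p,q] = ⨆ { F local monotone ∣ p ≤ F q }`. -/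
def spec {S M : Type*} [PartialCommMonoid M] (p q : Set (S × M)) :
    Set (S × M) → Set (S × M) :=
  sSup {F : Set (S × M) → Set (S × M) | LocalPT F ∧ Monotone F ∧ p ⊆ F q}

/-- Framing law for refinement: `[p * r, q * r] ⊑ [p, q]`, where `⊑` is the
converse of the pointwise order `≤`, i.e. `[p,q] ≤ [p*r, q*r]`. -/
theorem framing_refinement_law {S M : Type*} [PartialCommMonoid M]
    (p q r : Set (S × M)) :
    spec p q ≤ spec (sep p r) (sep q r) := by
  apply sSup_le_sSup
  rintro F ⟨hL, hM, hpq⟩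
  refine ⟨hL, hM, ?_⟩
  rintro σ ⟨h₁, h₂, hm, hp, hr⟩
  exact hL q r ⟨h₁, h₂, hm, hpq hp, hr⟩
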